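/- arXiv:1009.1630 — 3 statements merged into one kernel-verified Lean document; each statement's English description precedes it below -/
import Mathlib

section
/- Let β > 0 be a real number, N ≥ 1 a natural number, and E₀ a real number. Then the limit as E₁ → ∞ of the integral from E₀ to E₁ of the function E ↦ (1 + e^{β(E−E₀)}/N)⁻¹ equals ln(N+1)/β. (This is the total work extracted by the quasistatic process that lowers N initially empty degenerate levels from energy +∞ down to E₀ while the system is in contact with a heat bath at inverse temperature β.) -/
open MeasureTheory Filter

/-! The integrand `(1 + e^{β(E-E₀)}/a)⁻¹` has the antiderivative `-log(1 + a e^{-β(E-E₀)})/β`,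
which tends to `0` as `E → ∞` and equals `-log(1 + a)/β` at `E₀`. -/

theorem tendsto_intervalIntegral_of_hasDerivAt_of_tendsto {f F : ℝ → ℝ} {L : ℝ} (a : ℝ)
    (hF : ∀ x, HasDerivAt F (f x) x) (hf : Continuous f) (hL : Tendsto F atTop (nhds L)) :
    Tendsto (fun b => ∫ x in a..b, f x) atTop (nhds (L - F a)) :=
  (hL.sub_const (F a)).congr fun b =>
    (intervalIntegral.integral_eq_sub_of_hasDerivAt (fun x _ => hF x)
      (hf.intervalIntegrable a b)).symm

section Occupation

variable {β a : ℝ}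

theorem hasDerivAt_neg_log_one_add_mul_exp (hβ : β ≠ 0) (ha : 0 < a) (E₀ E : ℝ) :
    HasDerivAt (fun E => -Real.log (1 + a * Real.exp (-(β * (E - E₀)))) / β)
      ((1 + Real.exp (β * (E - E₀)) / a)⁻¹) E := by
  have hinner : HasDerivAt (fun E => 1 + a * Real.exp (-(β * (E - E₀))))
      (a * (Real.exp (-(β * (E - E₀))) * -β)) E := by
    have hlin : HasDerivAt (fun E => -(β * (E - E₀))) (-β) E := by
      simpa using (((hasDerivAt_id' E).sub_const E₀).const_mul β).fun_neg
    exact (hlin.exp.const_mul a).const_add 1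
  refine ((hinner.log (by positivity)).neg.div_const β).congr_deriv ?_
  have hexp : Real.exp (-(β * (E - E₀))) * Real.exp (β * (E - E₀)) = 1 := by
    rw [← Real.exp_add, neg_add_cancel, Real.exp_zero]
  field_simp
  linear_combination hexp

theorem tendsto_neg_log_one_add_mul_exp (hβ : 0 < β) (a E₀ : ℝ) :
    Tendsto (fun E => -Real.log (1 + a * Real.exp (-(β * (E - E₀)))) / β) atTop (nhds 0) := by
  have hexp : Tendsto (fun E => Real.exp (-(β * (E - E₀)))) atTop (nhds 0) :=
    Real.tendsto_exp_atBot.comp <| tendsto_neg_atTop_atBot.comp <|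
      (tendsto_atTop_add_const_right atTop (-E₀) tendsto_id).const_mul_atTop hβ
  have hinner : Tendsto (fun E => 1 + a * Real.exp (-(β * (E - E₀)))) atTop (nhds 1) := by
    simpa using (hexp.const_mul a).const_add 1
  have hlog := (Real.continuousAt_log one_ne_zero).tendsto.comp hinner
  simpa using hlog.neg.div_const β

theorem tendsto_intervalIntegral_inv_one_add_exp_div (hβ : 0 < β) (ha : 0 < a) (E₀ : ℝ) :
    Tendsto (fun E₁ => ∫ E in E₀..E₁, (1 + Real.exp (β * (E - E₀)) / a)⁻¹) atTop
      (nhds (Real.log (a + 1) / β)) := by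
  have hcont : Continuous fun E => (1 + Real.exp (β * (E - E₀)) / a)⁻¹ := by
    fun_prop (disch := intro; positivity)
  convert tendsto_intervalIntegral_of_hasDerivAt_of_tendsto E₀
    (hasDerivAt_neg_log_one_add_mul_exp hβ.ne' ha E₀) hcont
    (tendsto_neg_log_one_add_mul_exp hβ a E₀) using 2
  simp [add_comm, neg_div]

end Occupation

/-- Work extraction (Theorem 4 of the appendix): for inverse temperature `β > 0`,
`N ≥ 1` initially empty degenerate levels, and base energy `E₀`, the limit as
`E₁ → ∞` of `∫_{E₀}^{E₁} (1 + e^{β(E−E₀)}/N)⁻¹ dE` equals `ln(N+1)/β`. -/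
theorem work_extraction_limit (β : ℝ) (hβ : 0 < β) (N : ℕ) (hN : 1 ≤ N) (E₀ : ℝ) :
    Tendsto (fun E₁ : ℝ => ∫ E in E₀..E₁, (1 + Real.exp (β * (E - E₀)) / (N : ℝ))⁻¹)
      atTop (nhds (Real.log ((N : ℝ) + 1) / β)) :=
  tendsto_intervalIntegral_inv_one_add_exp_div hβ (by exact_mod_cast hN) E₀
end

section
/- Let k > 0, T > 0 be real numbers, ℓ ≥ 1 a natural number, and E₀ a real number. Setting N = 2^ℓ − 1 and β = 1/(kT), the improper integral from E₀ to ∞ of E ↦ (1 + e^{β(E−E₀)}/N)⁻¹ equals ℓ·kT·ln 2. (Hence, using a heat bath at temperature T, exactly ℓ·kT·ln 2 of work can be extracted from an ℓ-qubit system initially in a pure state, leaving the system fully mixed; equivalently, k T ln 2 of work per qubit.) -/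
/-! The integrand `(1 + e^{βx}/N)⁻¹ = N e^{-βx} / (1 + N e^{-βx})` has the primitive
`-log (1 + N e^{-βx}) / β`, which vanishes at `+∞`; so the integral over `(E₀, ∞)` is
`log (1 + N) / β`, and `1 + N = 2^ℓ`, `1/β = kT`. -/

open Filter Topology MeasureTheory Set

namespace Real

theorem inv_one_add_exp_div_eq (N y : ℝ) (hN : N ≠ 0) :
    (1 + exp y / N)⁻¹ = N * exp (-y) / (1 + N * exp (-y)) := by
  rw [exp_neg]
  field_simp
  rw [add_comm]

theorem hasDerivAt_neg_log_one_add_mul_exp_neg_div {N β : ℝ} (hN : 0 < N) (hβ : β ≠ 0)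
    (x : ℝ) :
    HasDerivAt (fun x => -log (1 + N * exp (-(β * x))) / β) (1 + exp (β * x) / N)⁻¹ x := by
  have hpos : 0 < 1 + N * exp (-(β * x)) := by positivity
  have hinner : HasDerivAt (fun x => 1 + N * exp (-(β * x))) (N * (exp (-(β * x)) * -β)) x :=
    (((hasDerivAt_id x).const_mul β).neg.exp.const_mul N).const_add 1 |>.congr_deriv
      (by simp)
  refine (hinner.log hpos.ne').neg.div_const β |>.congr_deriv ?_
  rw [inv_one_add_exp_div_eq N _ hN.ne']
  field_simp

theorem tendsto_log_one_add_mul_exp_neg_atTop (N : ℝ) {β : ℝ} (hβ : 0 < β) :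
    Tendsto (fun x => log (1 + N * exp (-(β * x)))) atTop (𝓝 0) := by
  have hexp : Tendsto (fun x => exp (-(β * x))) atTop (𝓝 0) :=
    tendsto_exp_atBot.comp (tendsto_neg_atTop_atBot.comp (tendsto_id.const_mul_atTop hβ))
  have h := ((hexp.const_mul N).const_add 1).log (by norm_num)
  simpa using h

theorem integral_Ioi_inv_one_add_exp_div {N β : ℝ} (a : ℝ) (hN : 0 < N) (hβ : 0 < β) :
    ∫ x in Ioi a, (1 + exp (β * (x - a)) / N)⁻¹ = log (1 + N) / β := by
  have hderiv : ∀ x ∈ Ici a, HasDerivAt (fun x => -log (1 + N * exp (-(β * (x - a)))) / β)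
      (1 + exp (β * (x - a)) / N)⁻¹ x := fun x _ =>
    (hasDerivAt_neg_log_one_add_mul_exp_neg_div hN hβ.ne' (x - a)).comp_sub_const x a
  have hlim : Tendsto (fun x => -log (1 + N * exp (-(β * (x - a)))) / β) atTop (𝓝 0) := by
    simpa [sub_eq_add_neg] using ((tendsto_log_one_add_mul_exp_neg_atTop N hβ).comp
      (tendsto_atTop_add_const_right atTop (-a) tendsto_id)).neg.div_const β
  rw [integral_Ioi_of_hasDerivAt_of_nonneg' hderiv (fun x _ => by positivity) hlim]
  simp [neg_div]

end Real

/-- Using a heat bath at temperature `T`, exactly `ℓ k T ln 2` of work can be extracted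
from an `ℓ`-qubit system initially in a pure state: with `N = 2^ℓ − 1` unoccupied levels
and `β = 1/(kT)`, the improper integral from `E₀` to `∞` of the total occupation
probability `(1 + e^{β(E−E₀)}/N)⁻¹` equals `ℓ · kT · ln 2`. -/
theorem work_extraction_pure_qubits (k T : ℝ) (hk : 0 < k) (hT : 0 < T)
    (ℓ : ℕ) (hℓ : 1 ≤ ℓ) (E₀ : ℝ) :
    ∫ E in Set.Ioi E₀,
        (1 + Real.exp ((1 / (k * T)) * (E - E₀)) / ((2 : ℝ) ^ ℓ - 1))⁻¹
      = (ℓ : ℝ) * (k * T * Real.log 2) := by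
  have hN : (0 : ℝ) < 2 ^ ℓ - 1 := by
    have : (2 : ℝ) ≤ 2 ^ ℓ := by simpa using pow_le_pow_right₀ (by norm_num : (1 : ℝ) ≤ 2) hℓ
    linarith
  rw [Real.integral_Ioi_inv_one_add_exp_div E₀ hN (by positivity), add_sub_cancel,
    Real.log_pow]
  field_simp
end

section
/- Let ψ and φ be unit vectors in ℂ^{d_A} ⊗ ℂ^{d_B} whose reduced density matrices on the first factor coincide: Tr₂|ψ⟩⟨ψ| = Tr₂|φ⟩⟨φ|. Then there exists a unitary d_B × d_B matrix U such that (I_{d_A} ⊗ U)ψ = φ. That is, any two purifications of the same state, with purifying systems of equal dimension, are related by a unitary transformation acting only on the purifying system. -/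
open scoped BigOperators

/-- The von Neumann entropy (base 2) of a matrix, via its eigenvalues
(with the convention `0 · log₂ 0 = 0`); defined to be `0` on non-Hermitian matrices. -/
noncomputable def vnEntropy {n : Type*} [Fintype n] [DecidableEq n]
    (ρ : Matrix n n ℂ) : ℝ :=
  if h : ρ.IsHermitian then -∑ i, h.eigenvalues i * Real.logb 2 (h.eigenvalues i) else 0

/-- Partial trace over the first tensor factor. -/
noncomputable def ptrFst {dA dB : ℕ}
    (ρ : Matrix (Fin dA × Fin dB) (Fin dA × Fin dB) ℂ) : Matrix (Fin dB) (Fin dB) ℂ :=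
  fun j j' => ∑ i, ρ (i, j) (i, j')

/-- Partial trace over the second tensor factor. -/
noncomputable def ptrSnd {dA dB : ℕ}
    (ρ : Matrix (Fin dA × Fin dB) (Fin dA × Fin dB) ℂ) : Matrix (Fin dA) (Fin dA) ℂ :=
  fun i i' => ∑ j, ρ (i, j) (i', j)

/-- The rank-one density matrix `|ψ⟩⟨ψ|` associated with a vector `ψ`. -/
noncomputable def outerProj {ι : Type*} (ψ : ι → ℂ) : Matrix ι ι ℂ :=
  fun i j => ψ i * star (ψ j)

/-- The maximally entangled state `Ψ_d = d^{−1/2} ∑ᵢ eᵢ ⊗ eᵢ` on `ℂ^d ⊗ ℂ^d`. -/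
noncomputable def maxEnt (d : ℕ) : Fin d × Fin d → ℂ :=
  fun p => if p.1 = p.2 then ((Real.sqrt d)⁻¹ : ℝ) else 0

/-!
Reshape `ψ ∈ ℂ^{d_A} ⊗ ℂ^{d_B}` into the `d_B × d_A` matrix `X` with `ψ = vec X`. Then
`Tr₂|ψ⟩⟨ψ| = (Xᴴ X)ᵀ` and `(I ⊗ U) ψ = vec (U X)`, so the claim says that matrices `X`, `Y`
with equal Gram matrices `Xᴴ X = Yᴴ Y` satisfy `U X = Y` for some unitary `U`. Equal Gram
matrices make `X v ↦ Y v` a well-defined isometry from the range of `X`, and any isometry from a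
subspace of `ℂ^{d_B}` extends to a unitary of `ℂ^{d_B}`.
-/

open Matrix

theorem LinearMap.exists_linearIsometryEquiv_apply_eq_of_norm_eq {𝕜 E V : Type*} [RCLike 𝕜]
    [AddCommGroup E] [Module 𝕜 E] [NormedAddCommGroup V] [InnerProductSpace 𝕜 V]
    [FiniteDimensional 𝕜 V] {F G : E →ₗ[𝕜] V} (h : ∀ x, ‖F x‖ = ‖G x‖) :
    ∃ W : V ≃ₗᵢ[𝕜] V, ∀ x, W (F x) = G x := by
  have hker : LinearMap.ker F ≤ LinearMap.ker G := fun x hx => by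
    rw [LinearMap.mem_ker, ← norm_eq_zero, ← h, norm_eq_zero]
    exact hx
  let L : LinearMap.range F →ₗ[𝕜] V :=
    (LinearMap.ker F).liftQ G hker ∘ₗ F.quotKerEquivRange.symm.toLinearMap
  have hLF : ∀ x, L ⟨F x, LinearMap.mem_range_self F x⟩ = G x := fun x => by
    simp [L, LinearMap.quotKerEquivRange_symm_apply_image]
  let Lᵢ : LinearMap.range F →ₗᵢ[𝕜] V := ⟨L, by
    rintro ⟨_, x, rfl⟩
    rw [hLF, ← h]
    rfl⟩
  refine ⟨Lᵢ.extend.toLinearIsometryEquiv rfl, fun x => ?_⟩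
  exact (Lᵢ.extend_apply ⟨F x, _⟩).trans (hLF x)

namespace Matrix

variable {𝕜 m n : Type*} [RCLike 𝕜] [Fintype m] [Fintype n] [DecidableEq m] [DecidableEq n]

theorem toEuclideanLin_symm_mem_unitaryGroup (W : EuclideanSpace 𝕜 n ≃ₗᵢ[𝕜] EuclideanSpace 𝕜 n) :
    toEuclideanLin.symm W.toLinearMap ∈ unitaryGroup n 𝕜 :=
  W.toMatrix_mem_unitaryGroup (EuclideanSpace.basisFun n 𝕜) (EuclideanSpace.basisFun n 𝕜)

theorem inner_toEuclideanLin_toEuclideanLin (A : Matrix m n 𝕜) (x y : EuclideanSpace 𝕜 n) :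
    inner 𝕜 (toEuclideanLin A x) (toEuclideanLin A y) = inner 𝕜 x (toEuclideanLin (Aᴴ * A) y) := by
  rw [← LinearMap.adjoint_inner_right, ← toEuclideanLin_conjTranspose_eq_adjoint,
    toLpLin_mul_same, LinearMap.comp_apply]

theorem exists_unitary_mul_eq_of_conjTranspose_mul_self_eq {A B : Matrix m n 𝕜}
    (h : Aᴴ * A = Bᴴ * B) : ∃ U ∈ unitaryGroup m 𝕜, U * A = B := by
  have hnorm : ∀ x, ‖toEuclideanLin A x‖ = ‖toEuclideanLin B x‖ := fun x => by
    rw [norm_eq_sqrt_re_inner (𝕜 := 𝕜), norm_eq_sqrt_re_inner (𝕜 := 𝕜),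
      inner_toEuclideanLin_toEuclideanLin, inner_toEuclideanLin_toEuclideanLin, h]
  obtain ⟨W, hW⟩ := LinearMap.exists_linearIsometryEquiv_apply_eq_of_norm_eq hnorm
  refine ⟨toEuclideanLin.symm W.toLinearMap, toEuclideanLin_symm_mem_unitaryGroup W, ?_⟩
  apply toEuclideanLin.injective
  ext1 x
  rw [toLpLin_mul_same, LinearMap.comp_apply, LinearEquiv.apply_symm_apply]
  exact hW x

end Matrix

theorem ptrSnd_outerProj_vec {dA dB : ℕ} (X : Matrix (Fin dB) (Fin dA) ℂ) :
    ptrSnd (outerProj X.vec) = (Xᴴ * X)ᵀ := by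
  ext i i'
  simp only [ptrSnd, outerProj, vec, transpose_apply, mul_apply, conjTranspose_apply]
  exact Finset.sum_congr rfl fun j _ => mul_comm _ _

open Kronecker in
theorem purifications_related_by_unitary_general (dA dB : ℕ) (ψ φ : Fin dA × Fin dB → ℂ)
    (h : ptrSnd (outerProj ψ) = ptrSnd (outerProj φ)) :
    ∃ U : Matrix (Fin dB) (Fin dB) ℂ, U ∈ Matrix.unitaryGroup (Fin dB) ℂ ∧
      ((1 : Matrix (Fin dA) (Fin dA) ℂ) ⊗ₖ U).mulVec ψ = φ := by
  obtain ⟨X, rfl⟩ := vec_bijective.surjective ψ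
  obtain ⟨Y, rfl⟩ := vec_bijective.surjective φ
  rw [ptrSnd_outerProj_vec, ptrSnd_outerProj_vec, transpose_inj] at h
  obtain ⟨U, hU, hUX⟩ := exists_unitary_mul_eq_of_conjTranspose_mul_self_eq h
  exact ⟨U, hU, by rw [← vec_mul_eq_mulVec, hUX]⟩

open Kronecker in
/-- Any two purifications (with purifying systems of equal dimension) of the same
density matrix are related by a unitary on the purifying system: if unit vectors
`ψ, φ ∈ ℂ^{d_A} ⊗ ℂ^{d_B}` satisfy `Tr₂|ψ⟩⟨ψ| = Tr₂|φ⟩⟨φ|`, then there is a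
unitary `U` on `ℂ^{d_B}` with `(I ⊗ U)ψ = φ`. -/
theorem purifications_related_by_unitary (dA dB : ℕ) (ψ φ : Fin dA × Fin dB → ℂ)
    (hψ : ∑ p, ‖ψ p‖ ^ 2 = 1) (hφ : ∑ p, ‖φ p‖ ^ 2 = 1)
    (h : ptrSnd (outerProj ψ) = ptrSnd (outerProj φ)) :
    ∃ U : Matrix (Fin dB) (Fin dB) ℂ, U ∈ Matrix.unitaryGroup (Fin dB) ℂ ∧
      ((1 : Matrix (Fin dA) (Fin dA) ℂ) ⊗ₖ U).mulVec ψ = φ :=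
  purifications_related_by_unitary_general dA dB ψ φ h
end
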